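/- Suppose the family of ALL simple graphs on [n] = {0,1,...,n-1} admits an L-bit adjacency labeling scheme. If n ≥ 4, then L ≥ ⌈n/2⌉. If moreover the scheme is indexing and n ≥ 200, then L ≥ ⌈n/2⌉ + 1. -/

import Mathlib

/-!
Adjacency labels determine the graph, so `G ↦ Label G` embeds the `2 ^ (n choose 2)` graphs
into the `2 ^ (L * n)` labellings, whence `n - 1 ≤ 2 * L`. If `2 * L = n - 1` the embedding is a
bijection, so every constant labelling `fun _ => x` occurs; it describes the empty or the complete
graph according to `Edge x x`, so there are at most two labels, which is absurd for `n ≥ 4`.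

For an indexing scheme, `Label G` is determined by the permutation `Ind ∘ Label G` together with
one label in each fibre of `Ind`. With fibre sizes `m i` this bounds the number of graphs by
`n ! * ∏ i, m i ≤ n ! * (2 ^ L / n) ^ n` (AM-GM), and for `2 * L ≤ n + 1` the count gives
`n ^ n ≤ 2 ^ n * n !`, false for `n ≥ 6`.
-/

open Finset Nat Function Fintype

theorem Nat.two_mul_choose_two (n : ℕ) : 2 * n.choose 2 = n * (n - 1) := by
  rw [Nat.choose_two_right, Nat.mul_div_cancel' (Nat.even_mul_pred_self n).two_dvd]

theorem two_mul_pow_self_le_succ_pow {n : ℕ} (hn : n ≠ 0) : 2 * n ^ n ≤ (n + 1) ^ n := by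
  have h := pow_add_mul_le_add_pow (a := n) (b := 1) (Nat.zero_le _) (Nat.zero_le _) n
  rwa [mul_one, Nat.cast_id, ← pow_succ', Nat.succ_eq_add_one,
    Nat.sub_add_cancel (Nat.one_le_iff_ne_zero.2 hn), ← two_mul] at h

theorem two_pow_mul_factorial_lt_pow_self {n : ℕ} (hn : 6 ≤ n) : 2 ^ n * n ! < n ^ n := by
  induction n, hn using Nat.le_induction with
  | base => decide
  | succ k hk ih =>
    calc 2 ^ (k + 1) * (k + 1)! = 2 * (k + 1) * (2 ^ k * k !) := by
          rw [Nat.factorial_succ]; ring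
      _ < 2 * (k + 1) * k ^ k := by gcongr
      _ = (k + 1) * (2 * k ^ k) := by ring
      _ ≤ (k + 1) * (k + 1) ^ k := by gcongr; exact two_mul_pow_self_le_succ_pow (by omega)
      _ = (k + 1) ^ (k + 1) := (pow_succ' _ _).symm

theorem Finset.card_pow_mul_prod_le_sum_pow {ι : Type*} (s : Finset ι) (f : ι → ℝ)
    (hf : ∀ i ∈ s, 0 ≤ f i) : (#s : ℝ) ^ #s * ∏ i ∈ s, f i ≤ (∑ i ∈ s, f i) ^ #s := by
  rcases s.eq_empty_or_nonempty with rfl | hs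
  · simp
  have hcard : (0 : ℝ) < #s := by exact_mod_cast hs.card_pos
  have amgm := Real.geom_mean_le_arith_mean_weighted s (fun _ => (#s : ℝ)⁻¹) f
    (fun _ _ => by positivity) (by simp [hcard.ne']) hf
  rw [← Finset.mul_sum, Real.finsetProd_rpow s f hf] at amgm
  have hprod := pow_le_pow_left₀ (Real.rpow_nonneg (Finset.prod_nonneg hf) _) amgm #s
  rw [Real.rpow_inv_natCast_pow (Finset.prod_nonneg hf) hs.card_pos.ne', mul_pow] at hprod
  calc (#s : ℝ) ^ #s * ∏ i ∈ s, f i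
      ≤ (#s : ℝ) ^ #s * ((#s : ℝ)⁻¹ ^ #s * (∑ i ∈ s, f i) ^ #s) := by gcongr
    _ = (∑ i ∈ s, f i) ^ #s := by
        rw [← mul_assoc, ← mul_pow, mul_inv_cancel₀ hcard.ne', one_pow, one_mul]

variable {V α : Type*}

noncomputable def Equiv.bijectiveCompEquivPermProdFiber (Ind : α → V) :
    {F : V → α // Bijective (Ind ∘ F)} ≃ Equiv.Perm V × ∀ i, {a // Ind a = i} where
  toFun F := (Equiv.ofBijective _ F.2, fun i =>
    ⟨F.1 ((Equiv.ofBijective _ F.2).symm i), (Equiv.ofBijective _ F.2).apply_symm_apply i⟩)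
  invFun p := ⟨fun u => (p.2 (p.1 u)).1, by
    have hcomp : Ind ∘ (fun u => (p.2 (p.1 u)).1) = p.1 := funext fun u => (p.2 (p.1 u)).2
    rw [hcomp]
    exact p.1.bijective⟩
  left_inv F := Subtype.ext <| funext fun u =>
    congrArg F.1 ((Equiv.ofBijective _ F.2).symm_apply_apply u)
  right_inv p := by
    obtain ⟨σ, s⟩ := p
    have hσ : ∀ u, Ind (s (σ u)).1 = σ u := fun u => (s (σ u)).2
    refine Prod.ext (Equiv.ext hσ) (funext fun i => Subtype.ext ?_)
    dsimp only
    generalize_proofs hbij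
    have hi : σ ((Equiv.ofBijective _ hbij).symm i) = i :=
      (hσ _).symm.trans ((Equiv.ofBijective _ hbij).apply_symm_apply i)
    exact congrArg (fun j => (s j).1) hi

theorem Nat.card_bijective_comp [Fintype V] (Ind : α → V) :
    Nat.card {F : V → α // Bijective (Ind ∘ F)} = (card V)! * ∏ i, Nat.card {a // Ind a = i} := by
  rw [Nat.card_congr (Equiv.bijectiveCompEquivPermProdFiber Ind), Nat.card_prod, Nat.card_perm,
    Nat.card_pi, Nat.card_eq_fintype_card]

theorem SimpleGraph.two_pow_choose_two_le_card [Fintype V] [DecidableEq V] :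
    2 ^ (card V).choose 2 ≤ card (SimpleGraph V) := by
  rw [← Sym2.card_subtype_not_diag, ← Fintype.card_set]
  refine Fintype.card_le_of_injective (fun s => SimpleGraph.fromEdgeSet (Subtype.val '' s)) ?_
  intro s t hst
  have hdiag : ∀ s : Set {e : Sym2 V // ¬e.IsDiag},
      Subtype.val '' s \ Sym2.diagSet = Subtype.val '' s := by
    intro s
    refine sdiff_eq_left.2 (Set.disjoint_left.2 ?_)
    rintro _ ⟨e, -, rfl⟩
    exact e.2
  have hedges := congrArg SimpleGraph.edgeSet hst
  simp only [SimpleGraph.edgeSet_fromEdgeSet, hdiag] at hedges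
  exact Subtype.val_injective.image_injective hedges

def IsAdjLabeling (Label : SimpleGraph V → V → α) (Edge : α → α → Bool) : Prop :=
  ∀ (G : SimpleGraph V) (u v : V), u ≠ v → (G.Adj u v ↔ Edge (Label G u) (Label G v) = true)

namespace IsAdjLabeling

variable {Label : SimpleGraph V → V → α} {Edge : α → α → Bool}

theorem injective (h : IsAdjLabeling Label Edge) : Injective Label := by
  intro G G' hGG'
  ext u v
  rcases eq_or_ne u v with rfl | huv
  · simp
  · rw [h G u v huv, h G' u v huv, hGG']

theorem injective_edge_diag [Nontrivial V] (h : IsAdjLabeling Label Edge)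
    (hsurj : Surjective Label) : Injective fun x => Edge x x := by
  intro x y hxy
  obtain ⟨G, hG⟩ := hsurj fun _ => x
  obtain ⟨G', hG'⟩ := hsurj fun _ => y
  have hGG' : G = G' := by
    ext u v
    rcases eq_or_ne u v with rfl | huv
    · simp
    · rw [h G u v huv, h G' u v huv, hG, hG']
      exact iff_of_eq (congrArg (· = true) hxy)
  obtain ⟨u⟩ := (inferInstance : Nonempty V)
  simpa [hGG', hG'] using (congrFun hG u).symm

theorem two_pow_choose_two_le_card_pow [Fintype V] [DecidableEq V] [Fintype α]
    (h : IsAdjLabeling Label Edge) : 2 ^ (card V).choose 2 ≤ card α ^ card V := by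
  rw [← Fintype.card_fun]
  exact SimpleGraph.two_pow_choose_two_le_card.trans (Fintype.card_le_of_injective _ h.injective)

theorem surjective_of_card_pow_le [Fintype V] [DecidableEq V] [Fintype α]
    (h : IsAdjLabeling Label Edge) (hcard : card α ^ card V ≤ 2 ^ (card V).choose 2) :
    Surjective Label := by
  refine ((Fintype.bijective_iff_injective_and_card _).2 ⟨h.injective, ?_⟩).2
  refine le_antisymm (Fintype.card_le_of_injective _ h.injective) ?_
  rw [Fintype.card_fun]
  exact hcard.trans SimpleGraph.two_pow_choose_two_le_card

theorem card_pow_mul_two_pow_le [Fintype V] [DecidableEq V] [Fintype α]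
    (h : IsAdjLabeling Label Edge) (Ind : α → V)
    (hInd : ∀ G, Bijective fun u => Ind (Label G u)) :
    card V ^ card V * 2 ^ (card V).choose 2 ≤ (card V)! * card α ^ card V := by
  set m : V → ℕ := fun i => Nat.card {a // Ind a = i}
  have hgraphs : card (SimpleGraph V) ≤ (card V)! * ∏ i, m i := by
    rw [← Nat.card_bijective_comp Ind, ← Nat.card_eq_fintype_card]
    exact Nat.card_le_card_of_injective (fun G => ⟨Label G, hInd G⟩)
      fun G G' hGG' => h.injective (congrArg Subtype.val hGG')
  have hsum : ∑ i, m i = card α := by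
    rw [← Nat.card_eq_fintype_card, ← Nat.card_congr (Equiv.sigmaFiberEquiv Ind), Nat.card_sigma]
  have hamgm : card V ^ card V * ∏ i, m i ≤ card α ^ card V := by
    have hreal := Finset.card_pow_mul_prod_le_sum_pow univ (fun i => (m i : ℝ))
      fun i _ => Nat.cast_nonneg _
    rw [Finset.card_univ, ← Nat.cast_sum, hsum] at hreal
    exact_mod_cast hreal
  calc card V ^ card V * 2 ^ (card V).choose 2
      ≤ card V ^ card V * ((card V)! * ∏ i, m i) :=
        Nat.mul_le_mul_left _ (SimpleGraph.two_pow_choose_two_le_card.trans hgraphs)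
    _ = (card V)! * (card V ^ card V * ∏ i, m i) := by ring
    _ ≤ (card V)! * card α ^ card V := Nat.mul_le_mul_left _ hamgm

end IsAdjLabeling

namespace IsAdjLabeling

variable {n L : ℕ} {Label : SimpleGraph (Fin n) → Fin n → Fin L → Bool}
  {Edge : (Fin L → Bool) → (Fin L → Bool) → Bool}

theorem succ_div_two_le (h : IsAdjLabeling Label Edge) (hn : 4 ≤ n) : (n + 1) / 2 ≤ L := by
  have hcount := h.two_pow_choose_two_le_card_pow
  simp only [Fintype.card_fin, Fintype.card_fun, Fintype.card_bool, ← pow_mul] at hcount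
  have hle : n.choose 2 ≤ L * n := (Nat.pow_le_pow_iff_right one_lt_two).1 hcount
  by_contra! hL
  have htight : L * n = n.choose 2 := by
    refine le_antisymm (Nat.le_of_mul_le_mul_left ?_ two_pos) hle
    rw [Nat.two_mul_choose_two, ← mul_assoc, mul_comm n]
    exact Nat.mul_le_mul_right _ (by omega)
  have hsurj := h.surjective_of_card_pow_le (by
    simp only [Fintype.card_fin, Fintype.card_fun, Fintype.card_bool, ← pow_mul, htight, le_rfl])
  have : Nontrivial (Fin n) := Fin.nontrivial_iff_two_le.2 (by omega)
  have hbool := Fintype.card_le_of_injective _ (h.injective_edge_diag hsurj)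
  simp only [Fintype.card_fun, Fintype.card_bool, Fintype.card_fin] at hbool
  have hL1 : L ≤ 1 := (Nat.pow_le_pow_iff_right one_lt_two).1 (by simpa using hbool)
  have hchoose := Nat.two_mul_choose_two n
  have h3n : 3 * n ≤ n * (n - 1) := by rw [mul_comm]; exact Nat.mul_le_mul_left _ (by omega)
  nlinarith

theorem succ_div_two_add_one_le_of_indexing (h : IsAdjLabeling Label Edge)
    (Ind : (Fin L → Bool) → Fin n) (hInd : ∀ G, Bijective fun u => Ind (Label G u))
    (hn : 6 ≤ n) : (n + 1) / 2 + 1 ≤ L := by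
  have hcount := h.card_pow_mul_two_pow_le Ind hInd
  simp only [Fintype.card_fin, Fintype.card_fun, Fintype.card_bool, ← pow_mul] at hcount
  by_contra! hL
  have hLn : L * n ≤ n.choose 2 + n := by
    refine Nat.le_of_mul_le_mul_left ?_ two_pos
    rw [mul_add, Nat.two_mul_choose_two, ← mul_assoc]
    calc 2 * L * n ≤ (n + 1) * n := Nat.mul_le_mul_right _ (by omega)
      _ = n * (n - 1) + 2 * n := by cases n <;> simp; ring
  have hfac : n ^ n * 2 ^ n.choose 2 ≤ 2 ^ n * n ! * 2 ^ n.choose 2 :=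
    calc n ^ n * 2 ^ n.choose 2 ≤ n ! * 2 ^ (L * n) := hcount
      _ ≤ n ! * 2 ^ (n.choose 2 + n) := by gcongr; norm_num
      _ = 2 ^ n * n ! * 2 ^ n.choose 2 := by ring
  exact (two_pow_mul_factorial_lt_pow_self hn).not_ge
    (Nat.le_of_mul_le_mul_right hfac (by positivity))

end IsAdjLabeling

theorem stmt18 (n L : ℕ)
    (Label : SimpleGraph (Fin n) → Fin n → (Fin L → Bool))
    (Edge : (Fin L → Bool) → (Fin L → Bool) → Bool)
    (hscheme : ∀ (G : SimpleGraph (Fin n)) (u v : Fin n), u ≠ v →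
      (G.Adj u v ↔ Edge (Label G u) (Label G v) = true)) :
    (4 ≤ n → (n + 1) / 2 ≤ L) ∧
    (200 ≤ n →
      (∃ Ind : (Fin L → Bool) → Fin n,
        ∀ G : SimpleGraph (Fin n),
          Function.Bijective fun u : Fin n => Ind (Label G u)) →
      (n + 1) / 2 + 1 ≤ L) :=
  ⟨IsAdjLabeling.succ_div_two_le hscheme, fun hn ⟨Ind, hInd⟩ =>
    IsAdjLabeling.succ_div_two_add_one_le_of_indexing hscheme Ind hInd (by omega)⟩
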